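/- Let γ ∈ (0,1), C ≥ 0, ε ≥ 0 with N^{1−γ} ε ≤ C for all N ≤ N₀, and let nonnegative reals a₁, …, a_{N₀} satisfy a_N ≤ C + C ε Σ_{k=1}^{N−1} k^{−γ} a_k for all N ≤ N₀. Then S_N := Σ_{k=1}^{N} k^{−γ} a_k ≤ C' N^{1−γ} for all N ≤ N₀, where C' depends only on C and γ; in particular a_N ≤ C'' for a constant C'' depending only on C and γ. -/
import Mathlib

open Finset

lemma gron_step (γ : ℝ) (hγ0 : 0 < γ) (hγ1 : γ < 1) (x : ℝ) (hx : 0 ≤ x) :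
    (1 - γ) * (x + 1) ^ (-γ) ≤ (x + 1) ^ (1 - γ) - x ^ (1 - γ) := by
  have h1 : x < x + 1 := by linarith
  obtain ⟨c, hc, hceq⟩ := exists_hasDerivAt_eq_slope (fun y : ℝ => y ^ (1 - γ))
      (fun y => (1 - γ) * y ^ (1 - γ - 1)) h1
      (by
        apply ContinuousOn.rpow_const continuousOn_id
        intro y hy; right; linarith)
      (fun y hy => by
        have hy0 : y ≠ 0 := by have := hy.1; intro h; rw [h] at this; linarith
        exact Real.hasDerivAt_rpow_const (Or.inl hy0))
  have hcpos : 0 < c := lt_of_le_of_lt hx hc.1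
  have hmono : (x + 1) ^ (-γ) ≤ c ^ (-γ) :=
    Real.rpow_le_rpow_of_nonpos hcpos hc.2.le (by linarith)
  have hsimp : (1 - γ) * c ^ (1 - γ - 1) = (x + 1) ^ (1 - γ) - x ^ (1 - γ) := by
    have h := hceq
    simp only [add_sub_cancel_left, div_one] at h
    exact h
  have hexp : 1 - γ - 1 = -γ := by ring
  rw [hexp] at hsimp
  calc (1 - γ) * (x + 1) ^ (-γ) ≤ (1 - γ) * c ^ (-γ) := by
        apply mul_le_mul_of_nonneg_left hmono; linarith
    _ = _ := hsimp

lemma gron_sum (γ : ℝ) (hγ0 : 0 < γ) (hγ1 : γ < 1) (N : ℕ) :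
    ∑ k ∈ Finset.Icc 1 N, (k : ℝ) ^ (-γ) ≤ (N : ℝ) ^ (1 - γ) / (1 - γ) := by
  have h1γ : (0:ℝ) < 1 - γ := by linarith
  induction N with
  | zero => simp [Real.zero_rpow (by linarith : (1:ℝ) - γ ≠ 0)]
  | succ M ih =>
      rw [Finset.sum_Icc_succ_top (by omega : 1 ≤ M + 1)]
      have hstep := gron_step γ hγ0 hγ1 (M : ℝ) (Nat.cast_nonneg M)
      push_cast
      rw [le_div_iff₀ h1γ] at ih ⊢
      nlinarith [ih, hstep]

/-- Discrete Gronwall-type estimate for the online JKO iterates.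
Fix `γ ∈ (0,1)` and `C ≥ 0`. There are constants `C', C''` depending only on
`C` and `γ` such that: whenever `ε ≥ 0` satisfies `N^{1−γ} ε ≤ C` for all `N ≤ N₀`,
and nonnegative reals `a₁, …, a_{N₀}` satisfy
`a_N ≤ C + C ε Σ_{k=1}^{N−1} k^{−γ} a_k` for all `1 ≤ N ≤ N₀`, then
`S_N = Σ_{k=1}^N k^{−γ} a_k ≤ C' N^{1−γ}` for all `N ≤ N₀`, and in particular
`a_N ≤ C''` for `1 ≤ N ≤ N₀`. -/
theorem discrete_gronwall_online_jko (γ C : ℝ) (hγ : γ ∈ Set.Ioo (0:ℝ) 1) (hC : 0 ≤ C) :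
    ∃ C' C'' : ℝ, 0 ≤ C' ∧ 0 ≤ C'' ∧
      ∀ (ε : ℝ) (hε : 0 ≤ ε) (N₀ : ℕ)
        (hεN : ∀ N : ℕ, N ≤ N₀ → (N : ℝ) ^ (1 - γ) * ε ≤ C)
        (a : ℕ → ℝ) (ha : ∀ k, 0 ≤ a k)
        (hrec : ∀ N : ℕ, 1 ≤ N → N ≤ N₀ →
          a N ≤ C + C * ε * ∑ k ∈ Finset.Icc 1 (N - 1), (k : ℝ) ^ (-γ) * a k),
        ∀ N : ℕ, N ≤ N₀ →
          (∑ k ∈ Finset.Icc 1 N, (k : ℝ) ^ (-γ) * a k ≤ C' * (N : ℝ) ^ (1 - γ)) ∧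
          (1 ≤ N → a N ≤ C'') := by
  obtain ⟨hγ0, hγ1⟩ := hγ
  have h1γ : (0:ℝ) < 1 - γ := by linarith
  set E : ℝ := Real.exp (C * C / (1 - γ)) with hE
  have hE1 : 1 ≤ E := Real.one_le_exp (by positivity)
  have hE0 : 0 < E := by linarith
  refine ⟨C * E / (1 - γ), C + C * (C * E / (1 - γ)) * C, by positivity, by positivity,
    fun ε hε N₀ hεN a ha hrec => ?_⟩
  set S : ℕ → ℝ := fun N => ∑ k ∈ Finset.Icc 1 N, (k : ℝ) ^ (-γ) * a k with hS
  set T : ℕ → ℝ := fun N => ∑ k ∈ Finset.Icc 1 N, (k : ℝ) ^ (-γ) with hT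
  set P : ℕ → ℝ := fun N => ∏ k ∈ Finset.Icc 1 N, (1 + C * ε * (k : ℝ) ^ (-γ)) with hP
  have hTnn : ∀ N, 0 ≤ T N := fun N => Finset.sum_nonneg fun k _ => by positivity
  have hSnn : ∀ N, 0 ≤ S N := fun N => Finset.sum_nonneg fun k _ => by
    have := ha k; positivity
  have hP1 : ∀ N, 1 ≤ P N := by
    intro N
    show 1 ≤ ∏ k ∈ Finset.Icc 1 N, (1 + C * ε * (k:ℝ) ^ (-γ))
    calc (1:ℝ) = ∏ _k ∈ Finset.Icc 1 N, (1:ℝ) := by simp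
      _ ≤ ∏ k ∈ Finset.Icc 1 N, (1 + C * ε * (k:ℝ) ^ (-γ)) := by
          apply Finset.prod_le_prod
          · intros; norm_num
          · intro k _
            have : 0 ≤ C * ε * (k:ℝ)^(-γ) := by positivity
            linarith
  -- key induction : S N ≤ C * T N * P N for N ≤ N₀
  have key : ∀ N, N ≤ N₀ → S N ≤ C * T N * P N := by
    intro N
    induction N with
    | zero => intro _; simp [hS, hT, hP]
    | succ M ih =>
        intro hMN
        have ihM := ih (by omega)
        have hSrec : S (M+1) = S M + ((M:ℝ)+1) ^ (-γ) * a (M+1) := by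
          rw [hS]; simp only; rw [Finset.sum_Icc_succ_top (by omega : 1 ≤ M + 1)]
          push_cast; ring
        have hTrec : T (M+1) = T M + ((M:ℝ)+1) ^ (-γ) := by
          rw [hT]; simp only; rw [Finset.sum_Icc_succ_top (by omega : 1 ≤ M + 1)]
          push_cast; ring
        have hPrec : P (M+1) = P M * (1 + C * ε * ((M:ℝ)+1) ^ (-γ)) := by
          rw [hP]; simp only; rw [Finset.prod_Icc_succ_top (by omega : 1 ≤ M + 1)]
          push_cast; ring
        have harec : a (M+1) ≤ C + C * ε * S M := by
          have h := hrec (M+1) (by omega) hMN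
          simpa using h
        have hpow : (0:ℝ) ≤ ((M:ℝ)+1) ^ (-γ) := by positivity
        have hPM1 := hP1 M
        have hPM2 := hP1 (M+1)
        have hTM := hTnn M
        have hSM := hSnn M
        have hProd1 : 1 ≤ P M * (1 + C * ε * ((M:ℝ)+1) ^ (-γ)) := hPrec ▸ hPM2
        rw [hSrec, hTrec, hPrec]
        nlinarith [mul_le_mul_of_nonneg_left harec hpow,
          mul_le_mul_of_nonneg_right ihM (by positivity : (0:ℝ) ≤ 1 + C * ε * ((M:ℝ)+1)^(-γ)),
          mul_le_mul_of_nonneg_left hProd1 (by positivity : (0:ℝ) ≤ C * (((M:ℝ)+1) ^ (-γ)))]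
  -- bound P N ≤ E for N ≤ N₀
  have hPbound : ∀ N, N ≤ N₀ → P N ≤ E := by
    intro N hN
    have h1 : P N ≤ Real.exp (C * ε * T N) := by
      rw [hP, hT, Finset.mul_sum, Real.exp_sum]
      apply Finset.prod_le_prod
      · intro k _; have : 0 ≤ C * ε * (k:ℝ)^(-γ) := by positivity
        linarith
      · intro k _
        linarith [Real.add_one_le_exp (C * ε * (k:ℝ) ^ (-γ))]
    refine h1.trans (Real.exp_le_exp.mpr ?_)
    have hT2 : T N ≤ (N:ℝ) ^ (1-γ) / (1-γ) := gron_sum γ hγ0 hγ1 N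
    have hεN' := hεN N hN
    have hrp : (0:ℝ) ≤ (N:ℝ)^(1-γ) := Real.rpow_nonneg (Nat.cast_nonneg N) _
    rw [le_div_iff₀ h1γ] at hT2 ⊢
    nlinarith [mul_le_mul_of_nonneg_left hT2 (mul_nonneg hC hε),
      mul_le_mul_of_nonneg_left hεN' hC]
  -- final bound on S
  have hSfin : ∀ N, N ≤ N₀ → S N ≤ C * E / (1 - γ) * (N:ℝ) ^ (1-γ) := by
    intro N hN
    have h1 := key N hN
    have h2 := hPbound N hN
    have hT2 : T N ≤ (N:ℝ) ^ (1-γ) / (1-γ) := gron_sum γ hγ0 hγ1 N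
    have hrp : (0:ℝ) ≤ (N:ℝ)^(1-γ) := Real.rpow_nonneg (Nat.cast_nonneg N) _
    have hTN := hTnn N
    calc S N ≤ C * T N * P N := h1
      _ ≤ C * T N * E := mul_le_mul_of_nonneg_left h2 (by positivity)
      _ ≤ C * ((N:ℝ)^(1-γ)/(1-γ)) * E :=
          mul_le_mul_of_nonneg_right (mul_le_mul_of_nonneg_left hT2 hC) hE0.le
      _ = C * E / (1 - γ) * (N:ℝ) ^ (1-γ) := by field_simp
  intro N hN
  refine ⟨hSfin N hN, fun hN1 => ?_⟩
  have h1 := hrec N hN1 hN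
  have h2 : S (N-1) ≤ C * E / (1 - γ) * ((N-1 : ℕ):ℝ) ^ (1-γ) := hSfin (N-1) (by omega)
  have h3 := hεN (N-1) (by omega)
  have hrp : (0:ℝ) ≤ ((N-1:ℕ):ℝ)^(1-γ) := Real.rpow_nonneg (Nat.cast_nonneg _) _
  have hSN := hSnn (N-1)
  have : C * ε * S (N-1) ≤ C * (C * E / (1-γ)) * C := by
    have hC' : (0:ℝ) ≤ C * E / (1-γ) := by positivity
    nlinarith [mul_le_mul_of_nonneg_left h2 (mul_nonneg hC hε),
      mul_le_mul_of_nonneg_left h3 (mul_nonneg hC hC')]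
  have hSdef : (∑ k ∈ Finset.Icc 1 (N - 1), (k : ℝ) ^ (-γ) * a k) = S (N-1) := rfl
  rw [hSdef] at h1
  linarith
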